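/- Let G be a group, 𝔤 = (g_1,…,g_n) a finite string of elements of G, ℰ = {E_1,…,E_m} a finite partition of G, and let a subsystem of Eq(𝔤,ℰ) consisting of n equations be encoded by n×ℓ (0,1)-matrices V and W (where ℓ = |Con(𝔤,ℰ)|). Suppose ∑_{i=1}^n (W_i − V_i) = (1,1,…,1) and there exists an n×n permutation matrix P, associated to a permutation π of {1,…,n}, such that the first n−1 rows of the matrix PW − P⁺V have only nonnegative entries. Then the Tarski number of G satisfies τ(G) ≤ 1 + |A_{π(1)}| + ℓ, where |A_{π(1)}| denotes the number of entries equal to 1 in row π(1) of V. -/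

import Mathlib

namespace PaperStmt

/-- A (0,1)-matrix: every entry is 0 or 1. -/
def ZeroOneMat {α β : Type*} (M : Matrix α β ℝ) : Prop := ∀ i j, M i j = 0 ∨ M i j = 1

/-- The lower-triangular matrix `T` with all entries on and below the diagonal equal to 1. -/
def Tmat (n : ℕ) : Matrix (Fin n) (Fin n) ℝ := fun i j => if j ≤ i then 1 else 0

/-- The permutation matrix associated to a permutation `σ` (row `i` is `e_{σ i}`). -/
def permMat {n : ℕ} (σ : Equiv.Perm (Fin n)) : Matrix (Fin n) (Fin n) ℝ :=
  fun i j => if σ i = j then 1 else 0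

/-- Cyclic successor on `Fin n`. -/
def cycSucc {n : ℕ} (i : Fin n) : Fin n := ⟨(i.val + 1) % n, Nat.mod_lt _ i.pos⟩

/-- `M⁺`: the matrix `M` with its rows cyclically shifted up by one. -/
def shiftRows {n : ℕ} {ι : Type*} (M : Matrix (Fin n) ι ℝ) : Matrix (Fin n) ι ℝ :=
  fun i j => M (cycSucc i) j

/-- The system `(B - A) X = 0` is *normal* if there is a permutation matrix `P` such that
every entry of `T P (B - A) - P⁺ A` is an integer `≥ -1`. -/
def IsNormal {n : ℕ} {ι : Type*} (A B : Matrix (Fin n) ι ℝ) : Prop :=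
  ∃ σ : Equiv.Perm (Fin n), ∀ (i : Fin n) (j : ι),
    ∃ z : ℤ,
      (Tmat n * (permMat σ * (B - A)) - shiftRows (permMat σ) * A) i j = (z : ℝ) ∧ -1 ≤ z

end PaperStmt

open Pointwise

namespace PaperStmt

/-- A group admits a paradoxical decomposition: there are pairwise disjoint subsets
`A 1, …, A p, B 1, …, B q` and group elements `s i`, `t j` such that the translates
`s i • A i` partition `G` and the translates `t j • B j` partition `G`. -/
def IsParadoxical (G : Type*) [Group G] : Prop :=
  ∃ (p q : ℕ), 0 < p ∧ 0 < q ∧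
    ∃ (A : Fin p → Set G) (B : Fin q → Set G) (s : Fin p → G) (t : Fin q → G),
      (∀ i i', i ≠ i' → Disjoint (A i) (A i')) ∧
      (∀ j j', j ≠ j' → Disjoint (B j) (B j')) ∧
      (∀ i j, Disjoint (A i) (B j)) ∧
      (⋃ i, s i • A i) = Set.univ ∧
      (∀ i i', i ≠ i' → Disjoint (s i • A i) (s i' • A i')) ∧
      (⋃ j, t j • B j) = Set.univ ∧
      (∀ j j', j ≠ j' → Disjoint (t j • B j) (t j' • B j'))

/-- A finitely additive, left-invariant probability measure defined on all subsets of `G`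
(the defining property of amenability for a discrete group). -/
def HasLeftInvariantMean (G : Type*) [Group G] : Prop :=
  ∃ μ : Set G → ℝ,
    (∀ A : Set G, 0 ≤ μ A ∧ μ A ≤ 1) ∧
    μ Set.univ = 1 ∧
    (∀ A B : Set G, Disjoint A B → μ (A ∪ B) = μ A + μ B) ∧
    (∀ (g : G) (A : Set G), μ (g • A) = μ A)

/-- A *complete* paradoxical decomposition with `p + q` pieces: the pieces
`A 1, …, A p, B 1, …, B q` form a partition of `G`, and the translates
`s i • A i` and `t j • B j` each form a partition of `G`. -/
def IsCompleteParadox (G : Type*) [Group G] (p q : ℕ) : Prop :=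
  ∃ (A : Fin p → Set G) (B : Fin q → Set G) (s : Fin p → G) (t : Fin q → G),
    (∀ i i', i ≠ i' → Disjoint (A i) (A i')) ∧
    (∀ j j', j ≠ j' → Disjoint (B j) (B j')) ∧
    (∀ i j, Disjoint (A i) (B j)) ∧
    ((⋃ i, A i) ∪ (⋃ j, B j)) = Set.univ ∧
    (⋃ i, s i • A i) = Set.univ ∧
    (∀ i i', i ≠ i' → Disjoint (s i • A i) (s i' • A i')) ∧
    (⋃ j, t j • B j) = Set.univ ∧
    (∀ j j', j ≠ j' → Disjoint (t j • B j) (t j' • B j'))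

/-- The Tarski number of a group: the least total number of pieces `p + q` over all
complete paradoxical decompositions of `G`, and `∞` if there is none. -/
noncomputable def tarskiNumber (G : Type*) [Group G] : ℕ∞ :=
  sInf {N : ℕ∞ | ∃ p q : ℕ, N = ((p + q : ℕ) : ℕ∞) ∧ IsCompleteParadox G p q}

end PaperStmt

open Pointwise

namespace PaperStmt

/-- `E : Fin m → Set G` is a partition of `G`: pairwise disjoint with union all of `G`. -/
def IsPartition {G : Type*} {m : ℕ} (E : Fin m → Set G) : Prop :=
  (∀ i j, i ≠ j → Disjoint (E i) (E j)) ∧ (⋃ i, E i) = Set.univ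

/-- `C = (c_0, …, c_n)` is a configuration for the pair `(g, E)`: there is `x ∈ E (c 0)`
with `g i * x ∈ E (c i)` for `1 ≤ i ≤ n`. -/
def IsConfig {G : Type*} [Group G] {n m : ℕ} (g : Fin n → G) (E : Fin m → Set G)
    (C : Fin (n + 1) → Fin m) : Prop :=
  ∃ x : G, x ∈ E (C 0) ∧ ∀ i : Fin n, g i * x ∈ E (C i.succ)

/-- `x_0(C) = E_{c_0} ∩ ⋂_{j=1}^n g_j⁻¹ E_{c_j}`. -/
def xzero {G : Type*} [Group G] {n m : ℕ} (g : Fin n → G) (E : Fin m → Set G)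
    (C : Fin (n + 1) → Fin m) : Set G :=
  E (C 0) ∩ ⋂ i : Fin n, (g i)⁻¹ • E (C i.succ)

/-- The string `(g_0, g_1, …, g_n)` with `g_0 = e`. -/
def ghat {G : Type*} [Group G] {n : ℕ} (g : Fin n → G) : Fin (n + 1) → G := Fin.cons 1 g

/-- `x_j(C) = g_j • x_0(C)` for `0 ≤ j ≤ n` (with `g_0 = e`). -/
def xj {G : Type*} [Group G] {n m : ℕ} (g : Fin n → G) (E : Fin m → Set G)
    (C : Fin (n + 1) → Fin m) (j : Fin (n + 1)) : Set G :=
  ghat g j • xzero g E C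

/-- The real-valued indicator of a proposition. -/
noncomputable def ind (P : Prop) : ℝ :=
  letI := Classical.propDecidable P; if P then 1 else 0

/-- `f` is a solution of the system of configuration equations `Eq(g, E)`:
for all `1 ≤ i ≤ m` and `0 ≤ j, k ≤ n`,
`∑_{C : x_j(C) ⊆ E_i} f C = ∑_{C : x_k(C) ⊆ E_i} f C`. -/
def IsEqSolution {G : Type*} [Group G] {n m : ℕ} (g : Fin n → G) (E : Fin m → Set G)
    (f : {C : Fin (n + 1) → Fin m // IsConfig g E C} → ℝ) : Prop :=
  ∀ (i : Fin m) (j k : Fin (n + 1)),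
    ∑ᶠ C ∈ {C : {C : Fin (n + 1) → Fin m // IsConfig g E C} | xj g E C.1 j ⊆ E i}, f C =
    ∑ᶠ C ∈ {C : {C : Fin (n + 1) → Fin m // IsConfig g E C} | xj g E C.1 k ⊆ E i}, f C

end PaperStmt

/-!
Write `D_C` for the set of points of `G` whose configuration is `C`. Row `t` of `W` (of `V`)
says that `g_{j_t} x` (that `g_{k_t} x`) lies in `E_{i_t}`, so `u_t = g_{k_t}⁻¹ g_{j_t}` carries
the points satisfying `W`-row `t` onto those satisfying `V`-row `t`. Number the rows along `π`. Then
`PW - P⁺V ≥ 0` says that `V`-row `t + 1` implies `W`-row `t`, and `∑ (W_i - V_i) = 1` says that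
every configuration satisfies exactly one more `W`-row than `V`-rows.

Put `w_t = u_1 ⋯ u_t`. By the first fact, "`w_{t-1}⁻¹ z` satisfies `V`-row `t`" is downward closed
in `t`, so on `Z = {z | z satisfies V-row 1}` it fails for the first time at exactly one `t + 1`;
then `w_t⁻¹ z` lies in `D_C` for a configuration `C` with `t` as an *exit index*
(`W`-row `t` holds, `V`-row `t + 1` fails). This cuts `Z` into the translates `w_t D_C`, and by the
second fact each `C` has one exit index, or two if `C` satisfies `V`-row 1. So `Z` consists of
`ℓ` pieces that translate back to the partition `{D_C}` of `G`, and `|A_{π(1)}|` pieces that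
translate back, together with `Zᶜ`, to another partition of `G`.
-/

namespace PaperStmt

open Finset

section Partition

variable {α ι κ : Type*}

def IsIndexedPartition (A : ι → Set α) : Prop := ∀ x, ∃! i, x ∈ A i

namespace IsIndexedPartition

variable {A : ι → Set α}

theorem disjoint (hA : IsIndexedPartition A) {i j : ι} (hij : i ≠ j) : Disjoint (A i) (A j) :=
  Set.disjoint_left.2 fun x hi hj => hij ((hA x).unique hi hj)

theorem iUnion_eq_univ (hA : IsIndexedPartition A) : ⋃ i, A i = Set.univ :=
  Set.eq_univ_of_forall fun x => Set.mem_iUnion.2 (hA x).exists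

theorem comp (hA : IsIndexedPartition A) {e : κ → ι} (he : e.Bijective) :
    IsIndexedPartition (A ∘ e) := by
  intro x
  obtain ⟨i, hi, huniq⟩ := hA x
  obtain ⟨j, rfl⟩ := he.2 i
  exact ⟨j, hi, fun j' hj' => he.1 (huniq _ hj')⟩

noncomputable def index (hA : IsIndexedPartition A) (x : α) : ι := (hA x).exists.choose

theorem mem_iff_index_eq (hA : IsIndexedPartition A) {x : α} {i : ι} :
    x ∈ A i ↔ hA.index x = i :=
  ⟨fun hi => (hA x).unique (hA x).exists.choose_spec hi, fun h => h ▸ (hA x).exists.choose_spec⟩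

end IsIndexedPartition

theorem isIndexedPartition_preimage_singleton (f : α → ι) :
    IsIndexedPartition fun i => f ⁻¹' {i} :=
  fun x => ⟨f x, rfl, fun _ h => h.symm⟩

theorem isIndexedPartition_option_preimage (f : α → ι) (p : ι → Prop) :
    IsIndexedPartition fun o : Option {i // p i} =>
      o.elim {x | ¬ p (f x)} fun i => f ⁻¹' {i.1} := by
  intro x
  by_cases hx : p (f x)
  · refine ⟨some ⟨f x, hx⟩, rfl, ?_⟩
    rintro (_ | ⟨i, hi⟩) h
    · exact absurd hx h
    · exact congrArg some (Subtype.ext h.symm)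
  · refine ⟨none, hx, ?_⟩
    rintro (_ | ⟨i, hi⟩) h
    · rfl
    · exact absurd (show p (f x) from (Set.mem_preimage.1 h).symm ▸ hi) hx

theorem IsPartition.isIndexedPartition {m : ℕ} {E : Fin m → Set α} (hE : IsPartition E) :
    IsIndexedPartition E := by
  intro x
  obtain ⟨i, hi⟩ := Set.mem_iUnion.1 (hE.2.symm ▸ Set.mem_univ x : x ∈ ⋃ i, E i)
  refine ⟨i, hi, fun j hj => ?_⟩
  by_contra hji
  exact Set.disjoint_left.1 (hE.1 j i hji) hj hi

end Partition

section Paradox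

variable {G : Type*} [Group G]

theorem isCompleteParadox_of_isIndexedPartition {ι κ : Type*} [Finite ι] [Finite κ]
    {A : ι → Set G} {B : κ → Set G} {s : ι → G} {t : κ → G}
    (hAB : IsIndexedPartition (Sum.elim A B)) (hsA : IsIndexedPartition fun i => s i • A i)
    (htB : IsIndexedPartition fun j => t j • B j) :
    IsCompleteParadox G (Nat.card ι) (Nat.card κ) := by
  set eι := (Finite.equivFin ι).symm
  set eκ := (Finite.equivFin κ).symm
  refine ⟨A ∘ eι, B ∘ eκ, s ∘ eι, t ∘ eκ,
    fun i i' h => hAB.disjoint (i := .inl _) (j := .inl _) (by simpa using h),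
    fun j j' h => hAB.disjoint (i := .inr _) (j := .inr _) (by simpa using h),
    fun i j => hAB.disjoint (i := .inl _) (j := .inr _) Sum.inl_ne_inr, ?_,
    ?_, fun i i' h => hsA.disjoint (by simpa using h),
    ?_, fun j j' h => htB.disjoint (by simpa using h)⟩
  · rw [← hAB.iUnion_eq_univ, Set.iUnion_sum]
    simp only [Function.comp_apply, eι.surjective.iUnion_comp A, eκ.surjective.iUnion_comp B,
      Sum.elim_inl, Sum.elim_inr]
  · rw [← hsA.iUnion_eq_univ]
    exact eι.surjective.iUnion_comp fun i => s i • A i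
  · rw [← htB.iUnion_eq_univ]
    exact eκ.surjective.iUnion_comp fun j => t j • B j

theorem isCompleteParadox_of_fiber_cover {K : Type*} [Finite K] (f : G → K) (p : K → Prop)
    (α β : K → G)
    (hcover : IsIndexedPartition (Sum.elim
      (fun o : Option {k // p k} => o.elim {z | ¬ p (f z)} fun k => β k • f ⁻¹' {k.1})
      fun k => α k • f ⁻¹' {k})) :
    IsCompleteParadox G (1 + Nat.card {k // p k}) (Nat.card K) := by
  rw [add_comm, ← Finite.card_option]
  refine isCompleteParadox_of_isIndexedPartition hcover (s := fun o => o.elim 1 fun k => (β k)⁻¹)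
    (t := fun k => (α k)⁻¹) ?_ ?_
  · convert isIndexedPartition_option_preimage f p using 2 with o
    rcases o with _ | k
    · exact one_smul G _
    · exact inv_smul_smul _ _
  · simpa only [inv_smul_smul] using isIndexedPartition_preimage_singleton f

theorem tarskiNumber_le {p q : ℕ} (h : IsCompleteParadox G p q) :
    tarskiNumber G ≤ ((p + q : ℕ) : ℕ∞) :=
  sInf_le ⟨p, q, rfl, h⟩

end Paradox

section Boundary

theorem exists_boundary {P : ℕ → Prop} (h0 : P 0) {N : ℕ} (hN : ¬ P N) :
    ∃ i, P i ∧ ¬ P (i + 1) := by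
  induction N with
  | zero => exact absurd h0 hN
  | succ N ih =>
    by_cases hPN : P N
    · exact ⟨N, hPN, hN⟩
    · exact ih hPN

theorem boundary_unique {P : ℕ → Prop} (hP : Antitone P) {i j : ℕ}
    (hi : P i ∧ ¬ P (i + 1)) (hj : P j ∧ ¬ P (j + 1)) : i = j := by
  by_contra hij
  rcases Nat.lt_or_gt_of_ne hij with h | h
  · exact hi.2 (hP h hj.1)
  · exact hj.2 (hP h hi.1)

theorem card_filter_and_not_succ {p q : ℕ → Prop} [DecidablePred p] [DecidablePred q] {n : ℕ}
    (hqp : ∀ i, q (i + 1) → p i) (hqn : ¬ q n)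
    (hcard : #{i ∈ range n | p i} = #{i ∈ range n | q i} + 1) :
    #{i ∈ range n | p i ∧ ¬ q (i + 1)} = if q 0 then 2 else 1 := by
  have hsplit := card_filter_add_card_filter_not (s := {i ∈ range n | p i}) fun i => q (i + 1)
  have hqp' : {i ∈ range n | p i ∧ q (i + 1)} = {i ∈ range n | q (i + 1)} :=
    filter_congr fun i _ => ⟨And.right, fun h => ⟨hqp i h, h⟩⟩
  rw [filter_filter, filter_filter, hqp'] at hsplit
  have hshift : #{i ∈ range n | q (i + 1)} + (if q 0 then 1 else 0) = #{i ∈ range n | q i} := by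
    have h := Finset.sum_range_succ' (fun i => if q i then 1 else 0) n
    rw [Finset.sum_range_succ, if_neg hqn] at h
    simp only [card_filter]
    omega
  split_ifs at hshift ⊢ <;> omega

theorem exists_pair_of_card_eq_ite {α : Type*} [DecidableEq α] {s : Finset α} {P : Prop}
    [Decidable P] (hs : #s = if P then 2 else 1) :
    ∃ i j, (P → i ≠ j) ∧ ∀ x, x ∈ s ↔ x = i ∨ P ∧ x = j := by
  split_ifs at hs with hP
  · obtain ⟨i, j, hij, rfl⟩ := card_eq_two.1 hs
    exact ⟨i, j, fun _ => hij, by simp [hP]⟩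
  · obtain ⟨i, rfl⟩ := card_eq_one.1 hs
    exact ⟨i, i, fun h => absurd h hP, by simp [hP]⟩

end Boundary

section Chain

variable {G K : Type*} [Group G]

def partialProd (u : ℕ → G) (j : ℕ) : G := ((List.range j).map u).prod

@[simp]
theorem partialProd_zero (u : ℕ → G) : partialProd u 0 = 1 := rfl

theorem partialProd_succ (u : ℕ → G) (j : ℕ) : partialProd u (j + 1) = partialProd u j * u j :=
  List.prod_range_succ u j

open Classical in
noncomputable def exitIndices (a b : ℕ → K → Prop) (n : ℕ) (k : K) : Finset ℕ :=
  {i ∈ range n | a i k ∧ ¬ b (i + 1) k}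

variable (cfg : G → K) {a b : ℕ → K → Prop} {u : ℕ → G}

theorem chain_step_iff (hu : ∀ i x, b i (cfg (u i * x)) ↔ a i (cfg x)) (z : G) (j : ℕ) :
    b j (cfg ((partialProd u j)⁻¹ * z)) ↔ a j (cfg ((partialProd u (j + 1))⁻¹ * z)) := by
  rw [← hu, partialProd_succ, mul_inv_rev, ← mul_assoc, mul_inv_cancel_left]

theorem chain_antitone (hu : ∀ i x, b i (cfg (u i * x)) ↔ a i (cfg x))
    (hmono : ∀ i k, b (i + 1) k → a i k) (z : G) :
    Antitone fun j => b j (cfg ((partialProd u j)⁻¹ * z)) :=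
  antitone_nat_of_succ_le fun j h => (chain_step_iff cfg hu z j).2 (hmono j _ h)

open Classical in
theorem mem_exitIndices_iff (hu : ∀ i x, b i (cfg (u i * x)) ↔ a i (cfg x))
    (hmono : ∀ i k, b (i + 1) k → a i k) {n : ℕ} (hbn : ∀ k, ¬ b n k) (z : G) (i : ℕ) :
    i ∈ exitIndices a b n (cfg ((partialProd u (i + 1))⁻¹ * z)) ↔
      b i (cfg ((partialProd u i)⁻¹ * z)) ∧ ¬ b (i + 1) (cfg ((partialProd u (i + 1))⁻¹ * z)) := by
  rw [exitIndices, mem_filter, mem_range, chain_step_iff cfg hu z i]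
  refine ⟨fun h => h.2, fun h => ⟨?_, h⟩⟩
  by_contra hin
  exact hbn _ (chain_antitone cfg hu hmono z (not_lt.1 hin) ((chain_step_iff cfg hu z i).2 h.1))

theorem isIndexedPartition_exit_pieces (hu : ∀ i x, b i (cfg (u i * x)) ↔ a i (cfg x))
    (hmono : ∀ i k, b (i + 1) k → a i k) {n : ℕ} (hbn : ∀ k, ¬ b n k) :
    IsIndexedPartition fun o : Option {p : K × ℕ // p.2 ∈ exitIndices a b n p.1} =>
      o.elim {z | ¬ b 0 (cfg z)} fun p => partialProd u (p.1.2 + 1) • cfg ⁻¹' {p.1.1} := by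
  intro z
  have hmem : ∀ k i, z ∈ partialProd u (i + 1) • cfg ⁻¹' {k} ↔
      cfg ((partialProd u (i + 1))⁻¹ * z) = k := fun k i => Set.mem_smul_set_iff_inv_smul_mem
  have hchain := chain_antitone cfg hu hmono z
  have hexit := mem_exitIndices_iff cfg hu hmono hbn z
  by_cases h0 : b 0 (cfg z)
  · obtain ⟨i, hi⟩ := exists_boundary (P := fun j => b j (cfg ((partialProd u j)⁻¹ * z)))
      (by simpa using h0) (hbn _)
    refine ⟨some ⟨(_, i), (hexit i).2 hi⟩, (hmem _ _).2 rfl, ?_⟩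
    rintro (_ | ⟨⟨k, i'⟩, hi'⟩) hz
    · exact absurd h0 hz
    · obtain rfl : cfg ((partialProd u (i' + 1))⁻¹ * z) = k := (hmem k i').1 hz
      obtain rfl := boundary_unique hchain ((hexit i').1 hi') hi
      rfl
  · refine ⟨none, h0, ?_⟩
    rintro (_ | ⟨⟨k, i⟩, hi⟩) hz
    · rfl
    · obtain rfl : cfg ((partialProd u (i + 1))⁻¹ * z) = k := (hmem k i).1 hz
      exact absurd (by simpa using hchain (Nat.zero_le i) ((hexit i).1 hi).1) h0

-- `a i`, `b i` play the roles of `W`-row `i + 1` and `V`-row `i + 1` of the header.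
open Classical in
theorem isCompleteParadox_of_chain [Finite K] (n : ℕ)
    (hu : ∀ i x, b i (cfg (u i * x)) ↔ a i (cfg x)) (hmono : ∀ i k, b (i + 1) k → a i k)
    (hbn : ∀ k, ¬ b n k) (hcount : ∀ k, #{i ∈ range n | a i k} = #{i ∈ range n | b i k} + 1) :
    IsCompleteParadox G (1 + Nat.card {k // b 0 k}) (Nat.card K) := by
  choose first second hne hmem using fun k =>
    exists_pair_of_card_eq_ite (card_filter_and_not_succ (hmono · k) (hbn k) (hcount k))
  let e : Option {k // b 0 k} ⊕ K → Option {p : K × ℕ // p.2 ∈ exitIndices a b n p.1} :=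
    Sum.elim (Option.map fun k => ⟨(k.1, second k.1), (hmem _ _).2 (Or.inr ⟨k.2, rfl⟩)⟩)
      fun k => some ⟨(k, first k), (hmem _ _).2 (Or.inl rfl)⟩
  have he : e.Bijective := by
    constructor
    · rintro ((_ | ⟨k, hk⟩) | k) ((_ | ⟨k', hk'⟩) | k') h <;> simp [e, Subtype.ext_iff] at h ⊢
      · exact h.1
      · obtain ⟨rfl, h⟩ := h
        exact hne k hk h.symm
      · obtain ⟨rfl, h⟩ := h
        exact hne k hk' h
      · exact h.1
    · rintro (_ | ⟨⟨k, i⟩, hi⟩)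
      · exact ⟨.inl none, rfl⟩
      · rcases (hmem k i).1 hi with rfl | ⟨hk, rfl⟩
        · exact ⟨.inr k, rfl⟩
        · exact ⟨.inl (some ⟨k, hk⟩), rfl⟩
  refine isCompleteParadox_of_fiber_cover cfg (b 0) (fun k => partialProd u (first k + 1))
    (fun k => partialProd u (second k + 1)) ?_
  convert (isIndexedPartition_exit_pieces cfg hu hmono hbn).comp he using 1
  funext y
  rcases y with (_ | k) | k <;> rfl

end Chain

section Rows

variable {G K : Type*} [Group G]

open Classical in
theorem card_filter_range_exists_lt {n : ℕ} (p : Fin n → Prop) :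
    #{i ∈ range n | ∃ h : i < n, p ⟨i, h⟩} = Nat.card {t // p t} := by
  rw [Nat.card_eq_fintype_card, Fintype.card_subtype, ← card_map Fin.valEmbedding]
  congr 1
  ext i
  simp only [mem_filter, mem_range, mem_map, mem_univ, true_and, Fin.valEmbedding_apply]
  exact ⟨fun ⟨_, _, hp⟩ => ⟨_, hp, rfl⟩, fun ⟨t, hp, ht⟩ => ht ▸ ⟨t.2, t.2, hp⟩⟩

open Classical in
theorem isCompleteParadox_of_rows [Finite K] {n : ℕ} (hn : 0 < n) (cfg : G → K)
    (p q : Fin n → K → Prop) (u : Fin n → G) (hu : ∀ t x, q t (cfg (u t * x)) ↔ p t (cfg x))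
    (hmono : ∀ (i : ℕ) (h : i + 1 < n) k, q ⟨i + 1, h⟩ k → p ⟨i, i.lt_of_succ_lt h⟩ k)
    (hcount : ∀ k, Nat.card {t // p t k} = Nat.card {t // q t k} + 1) :
    IsCompleteParadox G (1 + Nat.card {k // q ⟨0, hn⟩ k}) (Nat.card K) := by
  have key := isCompleteParadox_of_chain cfg (a := fun i k => ∃ h : i < n, p ⟨i, h⟩ k)
    (b := fun i k => ∃ h : i < n, q ⟨i, h⟩ k) (u := fun i => if h : i < n then u ⟨i, h⟩ else 1) n
    (fun i x => by
      by_cases h : i < n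
      · simp [h, hu]
      · exact ⟨fun ⟨h', _⟩ => absurd h' h, fun ⟨h', _⟩ => absurd h' h⟩)
    (fun i k ⟨h, hq⟩ => ⟨_, hmono i h k hq⟩) (fun k ⟨h, _⟩ => h.false)
    (fun k => by
      -- normalise the classical decidability instances of `isCompleteParadox_of_chain`
      rw [filter_congr_decidable, card_filter_range_exists_lt (p · k), filter_congr_decidable,
        card_filter_range_exists_lt (q · k)]
      exact hcount k)
  have hcard : Nat.card {k // ∃ h : 0 < n, q ⟨0, h⟩ k} = Nat.card {k // q ⟨0, hn⟩ k} :=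
    Nat.card_congr (Equiv.subtypeEquivRight fun k => ⟨fun ⟨_, h⟩ => h, fun h => ⟨hn, h⟩⟩)
  rwa [hcard] at key

end Rows

section Matrices

theorem ind_eq_one_iff {P : Prop} : ind P = 1 ↔ P := by
  by_cases h : P <;> simp [ind, h]

theorem ind_le_ind_iff {P Q : Prop} : ind Q ≤ ind P ↔ (Q → P) := by
  by_cases hP : P <;> by_cases hQ : Q <;> simp [ind, hP, hQ]

theorem sum_ind_eq_card {ι : Type*} [Fintype ι] (p : ι → Prop) :
    ∑ i, ind (p i) = Nat.card {i // p i} := by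
  classical
  rw [Nat.card_eq_fintype_card, Fintype.card_subtype]
  simp [ind]

theorem permMat_mul_apply {n : ℕ} {ι : Type*} (σ : Equiv.Perm (Fin n)) (M : Matrix (Fin n) ι ℝ)
    (i : Fin n) (j : ι) : (permMat σ * M) i j = M (σ i) j := by
  simp [Matrix.mul_apply, permMat]

theorem cycSucc_of_lt {n : ℕ} {i : ℕ} (h : i + 1 < n) :
    cycSucc (⟨i, i.lt_of_succ_lt h⟩ : Fin n) = ⟨i + 1, h⟩ :=
  Fin.ext (Nat.mod_eq_of_lt h)

theorem permMat_mul_sub_shiftRows_mul_apply {n : ℕ} {ι : Type*} (σ : Equiv.Perm (Fin n))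
    (W V : Matrix (Fin n) ι ℝ) {i : ℕ} (h : i + 1 < n) (j : ι) :
    (permMat σ * W - shiftRows (permMat σ) * V) ⟨i, i.lt_of_succ_lt h⟩ j =
      W (σ ⟨i, i.lt_of_succ_lt h⟩) j - V (σ ⟨i + 1, h⟩) j := by
  rw [Matrix.sub_apply, permMat_mul_apply, ← cycSucc_of_lt h]
  exact congrArg _ (permMat_mul_apply σ V _ j)

end Matrices

section Configurations

variable {G : Type*} [Group G] {n m : ℕ} {g : Fin n → G} {E : Fin m → Set G}

theorem mem_xzero_iff {C : Fin (n + 1) → Fin m} {x : G} :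
    x ∈ xzero g E C ↔ ∀ j, ghat g j * x ∈ E (C j) := by
  simp [xzero, ghat, Fin.forall_fin_succ, Set.mem_inv_smul_set_iff]

theorem xj_subset_iff (hE : IsIndexedPartition E) {C : Fin (n + 1) → Fin m}
    (hC : IsConfig g E C) {j : Fin (n + 1)} {i : Fin m} : xj g E C j ⊆ E i ↔ C j = i := by
  have hsub : xj g E C j ⊆ E (C j) := by
    rintro _ ⟨y, hy, rfl⟩
    exact mem_xzero_iff.1 hy j
  obtain ⟨x, hx0, hx⟩ := hC
  have hx : x ∈ xzero g E C :=
    mem_xzero_iff.2 (Fin.cases (by simpa [ghat] using hx0) (by simpa [ghat]))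
  have hy : ghat g j • x ∈ xj g E C j := Set.smul_mem_smul_set hx
  exact ⟨fun h => (hE _).unique (hsub hy) (h hy), fun h => h ▸ hsub⟩

noncomputable def configOf (g : Fin n → G) (hE : IsIndexedPartition E) (x : G) :
    {C // IsConfig g E C} :=
  ⟨fun j => hE.index (ghat g j * x), x, by simpa [ghat] using (hE.mem_iff_index_eq).2 rfl,
    fun i => by simpa [ghat] using (hE.mem_iff_index_eq).2 rfl⟩

theorem configOf_apply_eq_iff (hE : IsIndexedPartition E) {x : G} {j : Fin (n + 1)} {i : Fin m} :
    (configOf g hE x).1 j = i ↔ ghat g j * x ∈ E i :=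
  hE.mem_iff_index_eq.symm

end Configurations

/-- If a subsystem of `Eq(g, E)` of `n` equations, encoded by `n × ℓ` (0,1)-matrices `V`, `W`,
satisfies `∑_i (W_i - V_i) = (1, …, 1)` and there is a permutation matrix `P` (associated to a
permutation `σ`) such that the first `n - 1` rows of `P W - P⁺ V` are nonnegative, then
`τ(G) ≤ 1 + |A_{σ(1)}| + ℓ`, where `|A_{σ(1)}|` is the number of `1`s in row `σ(1)` of `V`
and `ℓ = |Con(g, E)|`. -/
theorem tarski_bound_special {G : Type*} [Group G] {n m : ℕ} (hn : 0 < n)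
    (g : Fin n → G) (E : Fin m → Set G) (hE : IsPartition E)
    (iT : Fin n → Fin m) (jT kT : Fin n → Fin (n + 1))
    (V W : Matrix (Fin n) {C : Fin (n + 1) → Fin m // IsConfig g E C} ℝ)
    (hV : ∀ t C, V t C = ind (xj g E C.1 (kT t) ⊆ E (iT t)))
    (hW : ∀ t C, W t C = ind (xj g E C.1 (jT t) ⊆ E (iT t)))
    (hsum : ∀ C, ∑ i, (W i C - V i C) = 1)
    (σ : Equiv.Perm (Fin n))
    (hrows : ∀ i : Fin n, i.val + 1 < n → ∀ C,
      0 ≤ (permMat σ * W - shiftRows (permMat σ) * V) i C) :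
    tarskiNumber G ≤
      ((1 + Nat.card {C : {C : Fin (n + 1) → Fin m // IsConfig g E C} // V (σ ⟨0, hn⟩) C = 1}
          + Nat.card {C : Fin (n + 1) → Fin m // IsConfig g E C} : ℕ) : ℕ∞) := by
  have hE' := hE.isIndexedPartition
  have hW' : ∀ t C, W t C = ind (C.1 (jT t) = iT t) := fun t C => by
    rw [hW, xj_subset_iff hE' C.2]
  have hV' : ∀ t C, V t C = ind (C.1 (kT t) = iT t) := fun t C => by
    rw [hV, xj_subset_iff hE' C.2]
  have hcard : ∀ p : Fin n → Prop, Nat.card {t // p (σ t)} = Nat.card {t // p t} :=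
    fun p => Nat.card_congr (σ.subtypeEquiv fun _ => Iff.rfl)
  have hparadox := isCompleteParadox_of_rows hn (configOf g hE')
    (fun t C => C.1 (jT (σ t)) = iT (σ t)) (fun t C => C.1 (kT (σ t)) = iT (σ t))
    (fun t => (ghat g (kT (σ t)))⁻¹ * ghat g (jT (σ t)))
    (fun t x => by simp only [configOf_apply_eq_iff, mul_assoc, mul_inv_cancel_left])
    (fun i h C => by
      simpa only [permMat_mul_sub_shiftRows_mul_apply σ W V h, hW', hV', sub_nonneg,
        ind_le_ind_iff] using hrows ⟨i, i.lt_of_succ_lt h⟩ h C)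
    (fun C => by
      have hC := hsum C
      simp only [hW', hV', sum_sub_distrib, sum_ind_eq_card] at hC
      rw [hcard (fun t => C.1 (jT t) = iT t), hcard (fun t => C.1 (kT t) = iT t)]
      exact_mod_cast sub_eq_iff_eq_add'.1 hC)
  refine (tarskiNumber_le hparadox).trans_eq ?_
  congr 3
  exact Nat.card_congr (Equiv.subtypeEquivRight fun C => by rw [hV', ind_eq_one_iff])

end PaperStmt
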